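/- Second derivative identity for ln Φ: for all x ∈ ℝ, (d²/dx²) ln Φ(x) = φ'(x)/Φ(x) − (φ(x)/Φ(x))², where φ is the standard normal pdf and φ'(x) = −x·φ(x); moreover this quantity is strictly negative for all x. -/

import Mathlib

open Real MeasureTheory Set

noncomputable def stdNormalCDF (x : ℝ) : ℝ :=
  ∫ t in Set.Iic x, (Real.sqrt (2 * π))⁻¹ * Real.exp (-t ^ 2 / 2)

noncomputable def stdNormalPDF (x : ℝ) : ℝ :=
  (Real.sqrt (2 * π))⁻¹ * Real.exp (-x ^ 2 / 2)

lemma pdf_pos (x : ℝ) : 0 < stdNormalPDF x := by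
  apply mul_pos (inv_pos.2 (Real.sqrt_pos.2 (by positivity))) (Real.exp_pos _)

lemma pdf_eq (x : ℝ) : stdNormalPDF x = (Real.sqrt (2 * π))⁻¹ * Real.exp (-(1/2) * x ^ 2) := by
  rw [stdNormalPDF]; ring_nf

lemma pdf_integrable : Integrable stdNormalPDF := by
  have := (integrable_exp_neg_mul_sq (by norm_num : (0:ℝ) < 1/2)).const_mul
    (Real.sqrt (2 * π))⁻¹
  exact this.congr (by
    filter_upwards with t
    rw [pdf_eq])

lemma pdf_continuous : Continuous stdNormalPDF := by
  unfold stdNormalPDF; fun_prop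

lemma cdf_pos (x : ℝ) : 0 < stdNormalCDF x := by
  have : 0 < ∫ t in Iic x, stdNormalPDF t := by
    rw [setIntegral_pos_iff_support_of_nonneg_ae
      (Filter.Eventually.of_forall fun t => (pdf_pos t).le) pdf_integrable.integrableOn]
    have hs : Function.support stdNormalPDF = univ := by
      ext t; simp [Function.mem_support, (pdf_pos t).ne']
    rw [hs, univ_inter]
    simp
  exact this

lemma cdf_hasDerivAt (x : ℝ) : HasDerivAt stdNormalCDF (stdNormalPDF x) x := by
  have hfun : stdNormalCDF = fun y => stdNormalCDF 0 + ∫ t in (0:ℝ)..y, stdNormalPDF t := by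
    funext y
    rw [intervalIntegral.integral_Iic_sub_Iic pdf_integrable.integrableOn
      pdf_integrable.integrableOn |>.symm]
    simp [stdNormalCDF, stdNormalPDF]
  rw [hfun]
  have : HasDerivAt (fun y => ∫ t in (0:ℝ)..y, stdNormalPDF t) (stdNormalPDF x) x :=
    intervalIntegral.integral_hasDerivAt_right pdf_integrable.intervalIntegrable
      (pdf_continuous.stronglyMeasurableAtFilter _ _) pdf_continuous.continuousAt
  simpa using this.const_add (stdNormalCDF 0)

lemma pdf_hasDerivAt (x : ℝ) : HasDerivAt stdNormalPDF (-x * stdNormalPDF x) x := by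
  have h1 : HasDerivAt (fun t : ℝ => -t ^ 2 / 2) (-x) x := by
    have := ((hasDerivAt_pow 2 x).neg).div_const 2
    convert this using 1
    rfl
    rfl
    rfl
    simp; ring
  have h2 := (h1.exp).const_mul (Real.sqrt (2 * π))⁻¹
  have : HasDerivAt stdNormalPDF ((Real.sqrt (2 * π))⁻¹ * (Real.exp (-x ^ 2 / 2) * -x)) x := h2
  convert this using 1
  rw [stdNormalPDF]; ring

lemma pdf_tendsto_atBot : Filter.Tendsto stdNormalPDF Filter.atBot (nhds 0) := by
  have h0 : Filter.Tendsto (fun t : ℝ => t ^ 2) Filter.atBot Filter.atTop := by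
    have := (Filter.tendsto_pow_atTop (n := 2) (by norm_num)).comp
      (Filter.tendsto_abs_atBot_atTop (G := ℝ))
    refine this.congr fun t => ?_
    simp [Function.comp, sq_abs]
  have h1 : Filter.Tendsto (fun t : ℝ => -t ^ 2 / 2) Filter.atBot Filter.atBot :=
    (Filter.tendsto_neg_atTop_atBot.comp h0).atBot_div_const (by norm_num)
  have h2 := (Real.tendsto_exp_atBot.comp h1).const_mul (Real.sqrt (2 * π))⁻¹
  rw [mul_zero] at h2
  exact h2.congr fun t => by rw [stdNormalPDF]; rfl

lemma mul_pdf_integrable : Integrable (fun t : ℝ => t * stdNormalPDF t) := by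
  have := (integrable_mul_exp_neg_mul_sq (by norm_num : (0:ℝ) < 1/2)).const_mul
    (Real.sqrt (2 * π))⁻¹
  exact this.congr (by filter_upwards with t; rw [pdf_eq]; ring)

lemma integral_neg_mul_pdf (x : ℝ) :
    ∫ t in Iic x, -t * stdNormalPDF t = stdNormalPDF x := by
  have := integral_Iic_of_hasDerivAt_of_tendsto
    (f := stdNormalPDF) (f' := fun t => -t * stdNormalPDF t) (a := x) (m := 0)
    (pdf_continuous.continuousWithinAt)
    (fun t _ => pdf_hasDerivAt t)
    ((mul_pdf_integrable.neg.congr (by filter_upwards with t; simp)).integrableOn)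
    pdf_tendsto_atBot
  simpa using this

lemma sub_pdf_integrable (x : ℝ) : Integrable (fun t : ℝ => (x - t) * stdNormalPDF t) :=
  ((pdf_integrable.const_mul x).sub mul_pdf_integrable).congr
    (by filter_upwards with t; simp [Pi.sub_apply]; ring)

lemma mills (x : ℝ) : 0 < stdNormalPDF x + x * stdNormalCDF x := by
  have key : stdNormalPDF x + x * stdNormalCDF x
      = ∫ t in Iic x, (x - t) * stdNormalPDF t := by
    have hsplit : ∫ t in Iic x, (x - t) * stdNormalPDF t
        = (∫ t in Iic x, x * stdNormalPDF t) + ∫ t in Iic x, -t * stdNormalPDF t := by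
      rw [← integral_add ((pdf_integrable.const_mul x).integrableOn)
        ((mul_pdf_integrable.neg.congr (by filter_upwards with t; simp)).integrableOn)]
      congr 1; funext t; ring
    rw [hsplit, integral_neg_mul_pdf, integral_const_mul]
    have : stdNormalCDF x = ∫ t in Iic x, stdNormalPDF t := rfl
    rw [← this]; ring
  rw [key]
  have h1 : (∫ t in Iic (x - 1), stdNormalPDF t)
      ≤ ∫ t in Iic (x - 1), (x - t) * stdNormalPDF t := by
    apply setIntegral_mono_on pdf_integrable.integrableOn
      (sub_pdf_integrable x).integrableOn measurableSet_Iic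
    intro t ht
    have ht' : t ≤ x - 1 := ht
    exact le_mul_of_one_le_left (pdf_pos t).le (by linarith)
  have h2 : (∫ t in Iic (x - 1), (x - t) * stdNormalPDF t)
      ≤ ∫ t in Iic x, (x - t) * stdNormalPDF t := by
    apply setIntegral_mono_set (sub_pdf_integrable x).integrableOn
    · filter_upwards [ae_restrict_mem measurableSet_Iic] with t ht
      exact mul_nonneg (by simp at ht; linarith) (pdf_pos t).le
    · exact HasSubset.Subset.eventuallyLE (Iic_subset_Iic.2 (by linarith))
  have h0 : 0 < ∫ t in Iic (x - 1), stdNormalPDF t := cdf_pos (x - 1)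
  linarith

lemma deriv_log_cdf : deriv (fun y => Real.log (stdNormalCDF y))
    = fun y => stdNormalPDF y / stdNormalCDF y := by
  funext y
  exact ((cdf_hasDerivAt y).log (cdf_pos y).ne').deriv

theorem second_deriv_log_normcdf (x : ℝ) :
    deriv (deriv (fun y => Real.log (stdNormalCDF y))) x =
      (-x * stdNormalPDF x) / stdNormalCDF x - (stdNormalPDF x / stdNormalCDF x) ^ 2 ∧
    deriv (deriv (fun y => Real.log (stdNormalCDF y))) x < 0 := by
  have hd : HasDerivAt (fun y => stdNormalPDF y / stdNormalCDF y)
      ((-x * stdNormalPDF x * stdNormalCDF x - stdNormalPDF x * stdNormalPDF x)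
        / stdNormalCDF x ^ 2) x :=
    (pdf_hasDerivAt x).div (cdf_hasDerivAt x) (cdf_pos x).ne'
  have heq : deriv (deriv (fun y => Real.log (stdNormalCDF y))) x
      = (-x * stdNormalPDF x * stdNormalCDF x - stdNormalPDF x * stdNormalPDF x)
        / stdNormalCDF x ^ 2 := by
    rw [deriv_log_cdf]; exact hd.deriv
  have hc := cdf_pos x
  have hp := pdf_pos x
  constructor
  · rw [heq]; field_simp
  · rw [heq]
    apply div_neg_of_neg_of_pos _ (by positivity)
    nlinarith [mul_pos hp (mills x)]
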